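/- arXiv:2510.00772 — 9 statements merged into one kernel-verified Lean document; each statement's English description precedes it below -/
import Mathlib

section
/- If f is an isomorphism from P(H) to P(K), where H and K are monoids, then the image under f of the set of units H^× (viewed as an element of P(H)) equals K^× (viewed as an element of P(K)). -/
open Pointwise

noncomputable instance powMul {M : Type*} [Mul M] : Mul {X : Set M // X.Nonempty} :=
  ⟨fun A B => ⟨A.1 * B.1, A.2.mul B.2⟩⟩

/-- Units of the power monoid are singletons of units. -/
lemma singleton_of_unit {M : Type*} [Monoid M] (V V' : {X : Set M // X.Nonempty})
    (h1 : V * V' = ⟨{1}, ⟨1, rfl⟩⟩) (h2 : V' * V = ⟨{1}, ⟨1, rfl⟩⟩) :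
    ∃ v : M, IsUnit v ∧ V = ⟨{v}, ⟨v, rfl⟩⟩ := by
  obtain ⟨v, hv⟩ := V.2
  obtain ⟨w, hw⟩ := V'.2
  have hmem : ∀ x ∈ V.1, ∀ y ∈ V'.1, x * y = 1 := by
    intro x hx y hy
    have hx' : x * y ∈ (V * V').1 := Set.mul_mem_mul hx hy
    rw [h1] at hx'
    exact hx'
  have hmem' : ∀ y ∈ V'.1, ∀ x ∈ V.1, y * x = 1 := by
    intro y hy x hx
    have hx' : y * x ∈ (V' * V).1 := Set.mul_mem_mul hy hx
    rw [h2] at hx'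
    exact hx'
  refine ⟨v, ⟨⟨v, w, hmem v hv w hw, hmem' w hw v hv⟩, rfl⟩, ?_⟩
  apply Subtype.ext
  ext x
  simp only [Set.mem_singleton_iff]
  constructor
  · intro hx
    calc x = x * (w * v) := by rw [hmem' w hw v hv, mul_one]
    _ = (x * w) * v := by rw [mul_assoc]
    _ = v := by rw [hmem x hx w hw, one_mul]
  · rintro rfl; exact hv

theorem stmt_4 {H K : Type*} [Monoid H] [Monoid K]
    (f : {X : Set H // X.Nonempty} → {Y : Set K // Y.Nonempty})
    (hbij : Function.Bijective f) (hmul : ∀ A B, f (A * B) = f A * f B) :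
    f ⟨{u : H | IsUnit u}, ⟨1, isUnit_one⟩⟩ = ⟨{u : K | IsUnit u}, ⟨1, isUnit_one⟩⟩ := by
  set eH : {X : Set H // X.Nonempty} := ⟨{1}, ⟨1, rfl⟩⟩ with heH
  set eK : {Y : Set K // Y.Nonempty} := ⟨{1}, ⟨1, rfl⟩⟩ with heK
  set EH : {X : Set H // X.Nonempty} := ⟨{u : H | IsUnit u}, ⟨1, isUnit_one⟩⟩ with hEH
  set EK : {Y : Set K // Y.Nonempty} := ⟨{u : K | IsUnit u}, ⟨1, isUnit_one⟩⟩ with hEK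
  -- f preserves the identity
  have hfe : f eH = eK := by
    have hr : ∀ B, B * f eH = B := by
      intro B
      obtain ⟨A, rfl⟩ := hbij.2 B
      rw [← hmul]
      congr 1
      apply Subtype.ext
      show A.1 * ({1} : Set H) = A.1
      rw [Set.singleton_one, mul_one]
    have h2 : eK * f eH = f eH := by
      apply Subtype.ext
      show ({1} : Set K) * (f eH).1 = (f eH).1
      rw [Set.singleton_one, one_mul]
    exact h2.symm.trans (hr eK)
  -- units of H map to singleton units of K
  have hunit : ∀ u : H, IsUnit u →
      ∃ v : K, IsUnit v ∧ f ⟨{u}, ⟨u, rfl⟩⟩ = ⟨{v}, ⟨v, rfl⟩⟩ := by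
    intro u hu
    obtain ⟨uu, rfl⟩ := hu
    have ha : (⟨{(uu : H)}, ⟨_, rfl⟩⟩ * ⟨{((uu⁻¹ : Hˣ) : H)}, ⟨_, rfl⟩⟩ :
        {X : Set H // X.Nonempty}) = eH := by
      apply Subtype.ext
      show ({(uu : H)} : Set H) * {((uu⁻¹ : Hˣ) : H)} = {1}
      rw [Set.singleton_mul_singleton, Units.mul_inv]
    have hb : (⟨{((uu⁻¹ : Hˣ) : H)}, ⟨_, rfl⟩⟩ * ⟨{(uu : H)}, ⟨_, rfl⟩⟩ :
        {X : Set H // X.Nonempty}) = eH := by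
      apply Subtype.ext
      show ({((uu⁻¹ : Hˣ) : H)} : Set H) * {(uu : H)} = {1}
      rw [Set.singleton_mul_singleton, Units.inv_mul]
    have h1 : f ⟨{(uu : H)}, ⟨_, rfl⟩⟩ * f ⟨{((uu⁻¹ : Hˣ) : H)}, ⟨_, rfl⟩⟩ = eK := by
      rw [← hmul, ha, hfe]
    have h2 : f ⟨{((uu⁻¹ : Hˣ) : H)}, ⟨_, rfl⟩⟩ * f ⟨{(uu : H)}, ⟨_, rfl⟩⟩ = eK := by
      rw [← hmul, hb, hfe]
    exact singleton_of_unit _ _ h1 h2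
  -- unit singletons of K come from unit singletons of H
  have hunit' : ∀ v : K, IsUnit v →
      ∃ u : H, IsUnit u ∧ f ⟨{u}, ⟨u, rfl⟩⟩ = ⟨{v}, ⟨v, rfl⟩⟩ := by
    intro v hv
    obtain ⟨vv, rfl⟩ := hv
    obtain ⟨U, hU⟩ := hbij.2 ⟨{(vv : K)}, ⟨_, rfl⟩⟩
    obtain ⟨U', hU'⟩ := hbij.2 ⟨{((vv⁻¹ : Kˣ) : K)}, ⟨_, rfl⟩⟩
    have h1 : f (U * U') = eK := by
      rw [hmul, hU, hU']
      apply Subtype.ext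
      show ({(vv : K)} : Set K) * {((vv⁻¹ : Kˣ) : K)} = {1}
      rw [Set.singleton_mul_singleton, Units.mul_inv]
    have h2 : f (U' * U) = eK := by
      rw [hmul, hU, hU']
      apply Subtype.ext
      show ({((vv⁻¹ : Kˣ) : K)} : Set K) * {(vv : K)} = {1}
      rw [Set.singleton_mul_singleton, Units.inv_mul]
    have hUU' : U * U' = eH := hbij.1 (h1.trans hfe.symm)
    have hU'U : U' * U = eH := hbij.1 (h2.trans hfe.symm)
    obtain ⟨u, hu, hUeq⟩ := singleton_of_unit U U' hUU' hU'U
    exact ⟨u, hu, by rw [← hUeq, hU]⟩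
  obtain ⟨Z', hZ'⟩ := hbij.2 EK
  -- Claim A : f EH * EK = f EH
  have claimA : f EH * EK = f EH := by
    apply Subtype.ext
    show (f EH).1 * EK.1 = (f EH).1
    ext x
    constructor
    · rintro ⟨z, hz, v, hv, rfl⟩
      obtain ⟨u, hu, hfu⟩ := hunit' v hv
      have hE : (EH * ⟨{u}, ⟨u, rfl⟩⟩ : {X : Set H // X.Nonempty}) = EH := by
        apply Subtype.ext
        show {w : H | IsUnit w} * ({u} : Set H) = {w : H | IsUnit w}
        ext y
        constructor
        · rintro ⟨w, hw, u', hu', rfl⟩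
          rw [Set.mem_singleton_iff] at hu'
          subst hu'
          exact hw.mul hu
        · intro hy
          obtain ⟨uu, rfl⟩ := hu
          exact ⟨y * (uu⁻¹ : Hˣ), hy.mul (Units.isUnit _), (uu : H), rfl,
            Units.inv_mul_cancel_right y uu⟩
      have hE2 : f EH * (⟨{v}, ⟨v, rfl⟩⟩ : {Y : Set K // Y.Nonempty}) = f EH := by
        rw [← hfu, ← hmul, hE]
      have : z * v ∈ (f EH * (⟨{v}, ⟨v, rfl⟩⟩ : {Y : Set K // Y.Nonempty})).1 :=
        Set.mul_mem_mul hz rfl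
      rw [hE2] at this
      exact this
    · intro hx
      have : x * 1 ∈ (f EH).1 * EK.1 := Set.mul_mem_mul hx isUnit_one
      rwa [mul_one] at this
  -- Claim B : EH * Z' = Z'
  have claimB : EH * Z' = Z' := by
    apply Subtype.ext
    show EH.1 * Z'.1 = Z'.1
    ext x
    constructor
    · rintro ⟨u, hu, z, hz, rfl⟩
      obtain ⟨v, hv, hfu⟩ := hunit u hu
      have hE : ((⟨{v}, ⟨v, rfl⟩⟩ : {Y : Set K // Y.Nonempty}) * EK) = EK := by
        apply Subtype.ext
        show ({v} : Set K) * {w : K | IsUnit w} = {w : K | IsUnit w}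
        ext y
        constructor
        · rintro ⟨v', hv', w, hw, rfl⟩
          rw [Set.mem_singleton_iff] at hv'
          subst hv'
          exact hv.mul hw
        · intro hy
          obtain ⟨vv, rfl⟩ := hv
          exact ⟨(vv : K), rfl, (vv⁻¹ : Kˣ) * y, (Units.isUnit _).mul hy,
            Units.mul_inv_cancel_left vv y⟩
      have h1 : f ((⟨{u}, ⟨u, rfl⟩⟩ : {X : Set H // X.Nonempty}) * Z') = EK := by
        rw [hmul, hfu, hZ', hE]
      have h2 : (⟨{u}, ⟨u, rfl⟩⟩ : {X : Set H // X.Nonempty}) * Z' = Z' :=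
        hbij.1 (h1.trans hZ'.symm)
      have : u * z ∈ ((⟨{u}, ⟨u, rfl⟩⟩ : {X : Set H // X.Nonempty}) * Z').1 :=
        Set.mul_mem_mul rfl hz
      rw [h2] at this
      exact this
    · intro hx
      have : (1 : H) * x ∈ EH.1 * Z'.1 := Set.mul_mem_mul isUnit_one hx
      rwa [one_mul] at this
  have h3 : f EH * EK = EK := by
    calc f EH * EK = f EH * f Z' := by rw [hZ']
    _ = f (EH * Z') := (hmul _ _).symm
    _ = f Z' := by rw [claimB]
    _ = EK := hZ'
  exact claimA.symm.trans h3
end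

section
/- If f is an isomorphism from P(H) to P(K), where H and K are monoids, then f restricts to an isomorphism from P(H^×) to P(K^×); i.e., f maps nonempty subsets of H^× bijectively onto nonempty subsets of K^×. -/
open Pointwise

namespace Stmt5Aux

variable {M : Type*} [Monoid M]

def e (M : Type*) [Monoid M] : {X : Set M // X.Nonempty} := ⟨{1}, ⟨1, rfl⟩⟩

def U (M : Type*) [Monoid M] : {X : Set M // X.Nonempty} :=
  ⟨{u | IsUnit u}, ⟨1, isUnit_one⟩⟩

lemma mul_val (A B : {X : Set M // X.Nonempty}) : (A * B).1 = A.1 * B.1 := rfl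

lemma mul_e (A : {X : Set M // X.Nonempty}) : A * e M = A := by
  apply Subtype.ext
  show A.1 * ({1} : Set M) = A.1
  rw [Set.singleton_one, mul_one]

lemma e_mul (A : {X : Set M // X.Nonempty}) : e M * A = A := by
  apply Subtype.ext
  show ({1} : Set M) * A.1 = A.1
  rw [Set.singleton_one, one_mul]

/-- invertibility in the power monoid -/
def Inv (A : {X : Set M // X.Nonempty}) : Prop := ∃ B, A * B = e M ∧ B * A = e M

lemma mulU_iff (A : {X : Set M // X.Nonempty}) :
    A * U M = U M ↔ A.1 ⊆ {u | IsUnit u} := by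
  constructor
  · intro h a ha
    have h1 : a * 1 ∈ (A * U M).1 := Set.mul_mem_mul ha (isUnit_one)
    rw [h] at h1
    simpa [U] using h1
  · intro h
    apply Subtype.ext
    apply Set.Subset.antisymm
    · rintro x hx
      rcases Set.mem_mul.1 hx with ⟨a, ha, u, hu, rfl⟩
      exact (h ha).mul hu
    · intro u hu
      obtain ⟨a, ha⟩ := A.2
      obtain ⟨va, rfl⟩ := h ha
      have hmem : (va : M) * ((va⁻¹ : Mˣ) * u) ∈ A.1 * {u | IsUnit u} :=
        Set.mul_mem_mul ha ((va⁻¹).isUnit.mul hu)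
      simpa [Units.mul_inv_cancel_left, mul_val, U] using hmem

lemma Umul_iff (A : {X : Set M // X.Nonempty}) :
    U M * A = U M ↔ A.1 ⊆ {u | IsUnit u} := by
  constructor
  · intro h a ha
    have h1 : (1 : M) * a ∈ (U M * A).1 := Set.mul_mem_mul (isUnit_one) ha
    rw [h] at h1
    simpa [U] using h1
  · intro h
    apply Subtype.ext
    apply Set.Subset.antisymm
    · rintro x hx
      rcases Set.mem_mul.1 hx with ⟨u, hu, a, ha, rfl⟩
      exact hu.mul (h ha)
    · intro u hu
      obtain ⟨a, ha⟩ := A.2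
      obtain ⟨va, rfl⟩ := h ha
      have hmem : (u * (va⁻¹ : Mˣ)) * (va : M) ∈ {u | IsUnit u} * A.1 :=
        Set.mul_mem_mul (hu.mul (va⁻¹).isUnit) ha
      simpa [Units.inv_mul_cancel_right, mul_val, U] using hmem

lemma inv_subset_units {A B : {X : Set M // X.Nonempty}}
    (hab : A * B = e M) (hba : B * A = e M) : A.1 ⊆ {u | IsUnit u} := by
  intro a ha
  obtain ⟨b, hb⟩ := B.2
  have h1 : a * b ∈ (A * B).1 := Set.mul_mem_mul ha hb
  have h2 : b * a ∈ (B * A).1 := Set.mul_mem_mul hb ha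
  rw [hab] at h1
  rw [hba] at h2
  have h1' : a * b = 1 := h1
  have h2' : b * a = 1 := h2
  exact ⟨⟨a, b, h1', h2'⟩, rfl⟩

lemma singleton_inv (u : Mˣ) :
    Inv (⟨{(u : M)}, ⟨_, rfl⟩⟩ : {X : Set M // X.Nonempty}) := by
  refine ⟨⟨{((u⁻¹ : Mˣ) : M)}, ⟨_, rfl⟩⟩, ?_, ?_⟩ <;>
  · apply Subtype.ext
    show ({_} : Set M) * {_} = {1}
    rw [Set.singleton_mul_singleton]
    simp

/-- the intrinsic characterization of the unit set -/
def Phi (G : {X : Set M // X.Nonempty}) : Prop :=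
  G * G = G ∧ (∀ A, Inv A → A * G = G ∧ G * A = G) ∧
    ∀ E, E * E = E → (∀ A, Inv A → A * E = E ∧ E * A = E) → G * E = E ∧ E * G = E

lemma phi_U : Phi (U M) := by
  refine ⟨(mulU_iff _).2 (fun x hx => hx), ?_, ?_⟩
  · intro A ⟨B, hab, hba⟩
    have h := inv_subset_units hab hba
    exact ⟨(mulU_iff _).2 h, (Umul_iff _).2 h⟩
  · intro E _ hEinv
    constructor
    · apply Subtype.ext
      apply Set.Subset.antisymm
      · rintro x hx
        rcases Set.mem_mul.1 hx with ⟨u, hu, y, hy, rfl⟩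
        obtain ⟨vu, rfl⟩ := hu
        have h := (hEinv ⟨{(vu : M)}, ⟨_, rfl⟩⟩ (singleton_inv vu)).1
        have hmem : (vu : M) * y ∈ (({(vu : M)} : Set M) * E.1) :=
          Set.mul_mem_mul rfl hy
        have h' : (({(vu : M)} : Set M) * E.1) = E.1 := congrArg Subtype.val h
        rwa [h'] at hmem
      · intro y hy
        have hmem : (1 : M) * y ∈ (U M).1 * E.1 := Set.mul_mem_mul isUnit_one hy
        simpa [mul_val, U] using hmem
    · apply Subtype.ext
      apply Set.Subset.antisymm
      · rintro x hx
        rcases Set.mem_mul.1 hx with ⟨y, hy, u, hu, rfl⟩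
        obtain ⟨vu, rfl⟩ := hu
        have h := (hEinv ⟨{(vu : M)}, ⟨_, rfl⟩⟩ (singleton_inv vu)).2
        have hmem : y * (vu : M) ∈ (E.1 * ({(vu : M)} : Set M)) :=
          Set.mul_mem_mul hy rfl
        have h' : (E.1 * ({(vu : M)} : Set M)) = E.1 := congrArg Subtype.val h
        rwa [h'] at hmem
      · intro y hy
        have hmem : y * (1 : M) ∈ E.1 * (U M).1 := Set.mul_mem_mul hy isUnit_one
        simpa [mul_val, U] using hmem

lemma phi_unique {G G' : {X : Set M // X.Nonempty}} (hG : Phi G) (hG' : Phi G') :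
    G = G' := by
  have h1 := (hG'.2.2 G hG.1 hG.2.1).2   -- G * G' = G
  have h2 := (hG.2.2 G' hG'.1 hG'.2.1).1 -- G * G' = G'
  rw [← h1, h2]

end Stmt5Aux

theorem stmt_5 {H K : Type*} [Monoid H] [Monoid K]
    (f : {X : Set H // X.Nonempty} → {Y : Set K // Y.Nonempty})
    (hbij : Function.Bijective f) (hmul : ∀ A B, f (A * B) = f A * f B) :
    ∀ X : {X : Set H // X.Nonempty},
      X.1 ⊆ {u : H | IsUnit u} ↔ (f X).1 ⊆ {u : K | IsUnit u} := by
  obtain ⟨hinj, hsurj⟩ := hbij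
  open Stmt5Aux in
  have fe : f (Stmt5Aux.e H) = Stmt5Aux.e K := by
    obtain ⟨A, hA⟩ := hsurj (Stmt5Aux.e K)
    have h1 : f (Stmt5Aux.e H) * Stmt5Aux.e K = Stmt5Aux.e K := by
      rw [← hA, ← hmul, Stmt5Aux.e_mul]
    rw [← Stmt5Aux.mul_e (f (Stmt5Aux.e H)), h1]
  have hInv_iff : ∀ A, Stmt5Aux.Inv A ↔ Stmt5Aux.Inv (f A) := by
    intro A
    constructor
    · rintro ⟨B, h1, h2⟩
      exact ⟨f B, by rw [← hmul, h1, fe], by rw [← hmul, h2, fe]⟩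
    · rintro ⟨B', h1, h2⟩
      obtain ⟨B, rfl⟩ := hsurj B'
      exact ⟨B, hinj (by rw [hmul, h1, fe]), hinj (by rw [hmul, h2, fe])⟩
  have hPhiF : Stmt5Aux.Phi (f (Stmt5Aux.U H)) := by
    refine ⟨?_, ?_, ?_⟩
    · rw [← hmul, Stmt5Aux.phi_U.1]
    · intro A' hA'
      obtain ⟨A, rfl⟩ := hsurj A'
      obtain ⟨h1, h2⟩ := Stmt5Aux.phi_U.2.1 A ((hInv_iff A).2 hA')
      exact ⟨by rw [← hmul, h1], by rw [← hmul, h2]⟩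
    · intro E' hE1 hE2
      obtain ⟨E, rfl⟩ := hsurj E'
      have hE1' : E * E = E := hinj (by rw [hmul, hE1])
      have hE2' : ∀ A, Stmt5Aux.Inv A → A * E = E ∧ E * A = E := by
        intro A hA
        obtain ⟨h1, h2⟩ := hE2 (f A) ((hInv_iff A).1 hA)
        exact ⟨hinj (by rw [hmul, h1]), hinj (by rw [hmul, h2])⟩
      obtain ⟨h1, h2⟩ := Stmt5Aux.phi_U.2.2 E hE1' hE2'
      exact ⟨by rw [← hmul, h1], by rw [← hmul, h2]⟩
  have hfU : f (Stmt5Aux.U H) = Stmt5Aux.U K :=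
    Stmt5Aux.phi_unique hPhiF Stmt5Aux.phi_U
  intro X
  rw [← Stmt5Aux.mulU_iff X, ← Stmt5Aux.mulU_iff (f X)]
  constructor
  · intro h
    rw [← hfU, ← hmul, h]
  · intro h
    apply hinj
    rw [hmul, hfU, h]
end

section
/- If H is a group and K is a monoid such that P(H) is isomorphic to P(K), then K is a group. -/
open Pointwise

theorem stmt_6 {H K : Type*} [Group H] [Monoid K]
    (f : {X : Set H // X.Nonempty} → {Y : Set K // Y.Nonempty})
    (hbij : Function.Bijective f) (hmul : ∀ A B, f (A * B) = f A * f B) :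
    ∀ x : K, IsUnit x := by
  intro x
  -- the full set of H, as an element of the power monoid
  set Hu : {X : Set H // X.Nonempty} := ⟨Set.univ, ⟨1, trivial⟩⟩ with hHu
  set Z : Set K := (f Hu).1 with hZdef
  have hval : ∀ A B : {X : Set H // X.Nonempty}, (A * B).1 = A.1 * B.1 := fun A B => rfl
  have hvalK : ∀ A B : {Y : Set K // Y.Nonempty}, (A * B).1 = A.1 * B.1 := fun A B => rfl
  -- Z is a two-sided zero of P(K)
  have hzero : ∀ (S : Set K), S.Nonempty → Z * S = Z ∧ S * Z = Z := by
    intro S hS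
    obtain ⟨A, hA⟩ := hbij.2 ⟨S, hS⟩
    constructor
    · have h1 : f Hu * ⟨S, hS⟩ = f Hu := by
        rw [← hA, ← hmul]
        congr 1
        exact Subtype.ext (Set.univ_mul A.2)
      have h2 := congrArg Subtype.val h1
      rw [hvalK] at h2
      exact h2
    · have h1 : (⟨S, hS⟩ : {Y : Set K // Y.Nonempty}) * f Hu = f Hu := by
        rw [← hA, ← hmul]
        congr 1
        exact Subtype.ext (Set.mul_univ A.2)
      have h2 := congrArg Subtype.val h1
      rw [hvalK] at h2
      exact h2
  by_cases h1Z : (1 : K) ∈ Z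
  · -- easy case: 1 ∈ Z gives left and right inverses for x
    have hx1 : (1 : K) ∈ ({x} : Set K) * Z := by rw [(hzero {x} ⟨x, rfl⟩).2]; exact h1Z
    have hx2 : (1 : K) ∈ Z * ({x} : Set K) := by rw [(hzero {x} ⟨x, rfl⟩).1]; exact h1Z
    rw [Set.mem_mul] at hx1 hx2
    obtain ⟨a, ha, w, hw, hxw⟩ := hx1
    obtain ⟨v, hv, b, hb, hvx⟩ := hx2
    rw [Set.mem_singleton_iff] at ha hb
    rw [ha] at hxw
    rw [hb] at hvx
    have hwv : w = v := by
      calc w = 1 * w := (one_mul w).symm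
        _ = (v * x) * w := by rw [hvx]
        _ = v * (x * w) := by rw [mul_assoc]
        _ = v := by rw [hxw, mul_one]
    exact ⟨⟨x, w, hxw, by rw [hwv]; exact hvx⟩, rfl⟩
  · -- hard case: 1 ∉ Z, derive a contradiction
    exfalso
    obtain ⟨z₀, hz₀⟩ := (f Hu).2
    have hz₀Z : z₀ ∈ Z := hz₀
    -- e : left identity of Z
    have hz₀mem : z₀ ∈ Z * ({z₀} : Set K) := by rw [(hzero {z₀} ⟨z₀, rfl⟩).1]; exact hz₀Z
    rw [Set.mem_mul] at hz₀mem
    obtain ⟨e, heZ, b, hb, hez₀⟩ := hz₀mem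
    rw [Set.mem_singleton_iff] at hb
    rw [hb] at hez₀
    have he : ∀ w ∈ Z, e * w = w := by
      intro w hw
      have hw2 : w ∈ ({z₀} : Set K) * Z := by rw [(hzero {z₀} ⟨z₀, rfl⟩).2]; exact hw
      rw [Set.mem_mul] at hw2
      obtain ⟨c, hc, u, hu, hzu⟩ := hw2
      rw [Set.mem_singleton_iff] at hc
      rw [hc] at hzu
      calc e * w = e * (z₀ * u) := by rw [hzu]
        _ = (e * z₀) * u := by rw [mul_assoc]
        _ = z₀ * u := by rw [hez₀]
        _ = w := hzu
    -- Y₀ = Z ∪ {1}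
    set Y₀ : {Y : Set K // Y.Nonempty} := ⟨Z ∪ {1}, ⟨1, Or.inr rfl⟩⟩ with hY₀def
    have hY₀mul : ∀ (S : Set K), S.Nonempty → (Z ∪ {1}) * S = Z ∪ S := by
      intro S hS
      rw [Set.union_mul, (hzero S hS).1, Set.singleton_mul]
      simp
    obtain ⟨W₀, hW₀⟩ := hbij.2 Y₀
    -- f maps the identity to the identity
    have hone : f ⟨({1} : Set H), ⟨1, rfl⟩⟩ = ⟨({1} : Set K), ⟨1, rfl⟩⟩ := by
      set oneH : {X : Set H // X.Nonempty} := ⟨({1} : Set H), ⟨1, rfl⟩⟩ with honeH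
      set oneK : {Y : Set K // Y.Nonempty} := ⟨({1} : Set K), ⟨1, rfl⟩⟩ with honeK
      have hid : f oneH * oneK = oneK := by
        obtain ⟨B, hB⟩ := hbij.2 oneK
        rw [← hB, ← hmul]
        congr 1
        apply Subtype.ext
        rw [hval]
        show ({1} : Set H) * B.1 = B.1
        rw [Set.singleton_mul]; simp
      have hid2 : f oneH * oneK = f oneH := by
        apply Subtype.ext
        rw [hvalK]
        show (f oneH).1 * ({1} : Set K) = (f oneH).1
        rw [Set.mul_singleton]; simp
      rw [hid2] at hid
      exact hid
    -- W₀ has two distinct elements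
    have hW₀two : ∃ g₁ ∈ W₀.1, ∃ g₂ ∈ W₀.1, g₁ ≠ g₂ := by
      by_contra hcon
      push_neg at hcon
      obtain ⟨g, hg⟩ := W₀.2
      have hWg : W₀.1 = {g} :=
        Set.eq_singleton_iff_unique_mem.2 ⟨hg, fun a ha => hcon a ha g hg⟩
      have hY₀idem : Y₀ * Y₀ = Y₀ := by
        apply Subtype.ext
        rw [hvalK]
        show (Z ∪ {1}) * (Z ∪ {1}) = Z ∪ {1}
        rw [hY₀mul (Z ∪ {1}) ⟨1, Or.inr rfl⟩]
        rw [← Set.union_assoc, Set.union_self]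
      have hWWf : f (W₀ * W₀) = f W₀ := by rw [hmul, hW₀, hY₀idem]
      have hWW : W₀ * W₀ = W₀ := hbij.1 hWWf
      have hWWv := congrArg Subtype.val hWW
      rw [hval, hWg, Set.singleton_mul_singleton] at hWWv
      have hgg : g * g = g := Set.singleton_eq_singleton_iff.1 hWWv
      have hg1 : g = 1 := mul_eq_left.mp hgg
      have hW1 : W₀ = ⟨({1} : Set H), ⟨1, rfl⟩⟩ := by
        apply Subtype.ext
        rw [hWg, hg1]
      rw [hW1, hone] at hW₀
      have hW₀v := congrArg Subtype.val hW₀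
      have h1 : Z ∪ {1} = ({1} : Set K) := hW₀v.symm
      have hz1 : z₀ ∈ ({1} : Set K) := by rw [← h1]; exact Or.inl hz₀Z
      rw [Set.mem_singleton_iff] at hz1
      exact h1Z (hz1 ▸ hz₀Z)
    obtain ⟨g₁, hg₁, g₂, hg₂, hgne⟩ := hW₀two
    -- a set with two distinct elements times a cosingleton is univ
    have hcos : ∀ (B : Set H), (∃ b₁ ∈ B, ∃ b₂ ∈ B, b₁ ≠ b₂) → ∀ h : H, B * ({h}ᶜ) = Set.univ := by
      intro B hB h
      obtain ⟨b₁, hb₁, b₂, hb₂, hbne⟩ := hB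
      apply Set.eq_univ_of_forall
      intro t
      rcases eq_or_ne t (b₁ * h) with h' | h'
      · -- use b₂
        have ht : t ≠ b₂ * h := by
          rw [h']; intro hc
          exact hbne (mul_right_cancel hc)
        rw [Set.mem_mul]
        refine ⟨b₂, hb₂, b₂⁻¹ * t, ?_, by rw [← mul_assoc, mul_inv_cancel, one_mul]⟩
        simp only [Set.mem_compl_iff, Set.mem_singleton_iff]
        intro hc
        apply ht
        rw [← hc, ← mul_assoc, mul_inv_cancel, one_mul]
      · rw [Set.mem_mul]
        refine ⟨b₁, hb₁, b₁⁻¹ * t, ?_, by rw [← mul_assoc, mul_inv_cancel, one_mul]⟩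
        simp only [Set.mem_compl_iff, Set.mem_singleton_iff]
        intro hc
        apply h'
        rw [← hc, ← mul_assoc, mul_inv_cancel, one_mul]
    have hcne : ∀ h : H, (({h}ᶜ : Set H)).Nonempty := by
      intro h
      rcases eq_or_ne g₁ h with h' | h'
      · exact ⟨g₂, by simp [← h', hgne.symm]⟩
      · exact ⟨g₁, by simp [h']⟩
    have hfHu : f Hu = ⟨Z, (f Hu).2⟩ := Subtype.ext rfl
    -- f of cosingletons lands inside Z
    have hSh : ∀ h : H, (f ⟨({h}ᶜ : Set H), hcne h⟩).1 ⊆ Z := by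
      intro h
      have hWcoh : W₀ * ⟨({h}ᶜ : Set H), hcne h⟩ = Hu := by
        apply Subtype.ext
        rw [hval]
        exact hcos W₀.1 ⟨g₁, hg₁, g₂, hg₂, hgne⟩ h
      have h1 : f (W₀ * ⟨({h}ᶜ : Set H), hcne h⟩) = f Hu := by rw [hWcoh]
      rw [hmul, hW₀] at h1
      have h2 := congrArg Subtype.val h1
      rw [hvalK] at h2
      have h3 : (Z ∪ {1}) * (f ⟨({h}ᶜ : Set H), hcne h⟩).1 = Z := h2
      rw [hY₀mul ((f ⟨({h}ᶜ : Set H), hcne h⟩).1) (f ⟨({h}ᶜ : Set H), hcne h⟩).2] at h3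
      exact Set.union_eq_left.1 h3
    -- A := f⁻¹ {e}
    obtain ⟨A, hA⟩ := hbij.2 ⟨({e} : Set K), ⟨e, rfl⟩⟩
    -- W₀ * A = Hu
    have hW₀A : W₀ * A = Hu := by
      apply hbij.1
      rw [hmul, hW₀, hA, hfHu]
      apply Subtype.ext
      rw [hvalK]
      show (Z ∪ {1}) * ({e} : Set K) = Z
      rw [hY₀mul ({e} : Set K) ⟨e, rfl⟩]
      exact Set.union_eq_left.2 (Set.singleton_subset_iff.2 heZ)
    -- A * cosingleton = cosingleton
    have hAcoh : ∀ h : H, A * ⟨({h}ᶜ : Set H), hcne h⟩ = ⟨({h}ᶜ : Set H), hcne h⟩ := by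
      intro h
      apply hbij.1
      rw [hmul, hA]
      apply Subtype.ext
      rw [hvalK]
      show ({e} : Set K) * (f ⟨({h}ᶜ : Set H), hcne h⟩).1 = (f ⟨({h}ᶜ : Set H), hcne h⟩).1
      ext s
      constructor
      · intro hs
        rw [Set.mem_mul] at hs
        obtain ⟨a, ha, y, hy, hay⟩ := hs
        rw [Set.mem_singleton_iff] at ha
        rw [ha] at hay
        rw [← hay, he y (hSh h hy)]
        exact hy
      · intro hs
        rw [Set.mem_mul]
        exact ⟨e, rfl, s, hs, he s (hSh h hs)⟩
    -- A is a singleton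
    have hAsub : ∀ a₁ ∈ A.1, ∀ a₂ ∈ A.1, a₁ = a₂ := by
      by_contra hcon
      push_neg at hcon
      obtain ⟨a₁, ha₁, a₂, ha₂, hane⟩ := hcon
      have h1 := hcos A.1 ⟨a₁, ha₁, a₂, ha₂, hane⟩ 1
      have h2 := congrArg Subtype.val (hAcoh 1)
      rw [hval] at h2
      have h3 : A.1 * ({(1:H)}ᶜ : Set H) = ({(1:H)}ᶜ : Set H) := h2
      rw [h1] at h3
      have h4 : (1:H) ∈ ({(1:H)}ᶜ : Set H) := by rw [← h3]; trivial
      simp at h4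
    obtain ⟨a, ha⟩ := A.2
    have hAa : A.1 = {a} :=
      Set.eq_singleton_iff_unique_mem.2 ⟨ha, fun y hy => hAsub y hy a ha⟩
    have hW₀univ : W₀.1 = Set.univ := by
      have h1 := congrArg Subtype.val hW₀A
      rw [hval, hAa] at h1
      apply Set.eq_univ_of_forall
      intro t
      have h2 : t * a ∈ W₀.1 * ({a} : Set H) := by rw [h1]; trivial
      rw [Set.mem_mul] at h2
      obtain ⟨w, hw, c, hc, hwc⟩ := h2
      rw [Set.mem_singleton_iff] at hc
      rw [hc] at hwc
      have hwt : w = t := mul_right_cancel hwc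
      exact hwt ▸ hw
    have hWHu : W₀ = Hu := Subtype.ext hW₀univ
    rw [hWHu, hfHu] at hW₀
    have hW₀v := congrArg Subtype.val hW₀
    have h1 : Z = Z ∪ {1} := hW₀v
    have h2 : (1 : K) ∈ Z := by rw [h1]; exact Or.inr rfl
    exact h1Z h2
end

section
/- A semigroup S is torsion-free (no element has finite order, except the identity if S is a monoid) if and only if its finitary power semigroup P_fin(S) is torsion-free, where the order of an element x is the cardinality of {xⁿ : n ≥ 1}. -/
open Pointwise

/-- `spow x n` is `x^(n+1)` in a semigroup. -/
def spow {T : Type*} [Semigroup T] (x : T) : ℕ → T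
  | 0 => x
  | n + 1 => spow x n * x

/-- A semigroup is torsion-free if every element of finite order
(i.e., with `{xⁿ : n ≥ 1}` finite) is an identity element. -/
def IsTorsionFreeSg (T : Type*) [Semigroup T] : Prop :=
  ∀ x : T, ({y : T | ∃ n : ℕ, spow x n = y}).Finite → ∀ z : T, x * z = z ∧ z * x = z

noncomputable instance pfinSemigroup {S : Type*} [Semigroup S] :
    Semigroup {X : Set S // X.Nonempty ∧ X.Finite} where
  mul A B := ⟨A.1 * B.1, ⟨A.2.1.mul B.2.1, A.2.2.mul B.2.2⟩⟩
  mul_assoc A B C := Subtype.ext (mul_assoc A.1 B.1 C.1)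

lemma pf_mul_val {S : Type*} [Semigroup S] (A B : {X : Set S // X.Nonempty ∧ X.Finite}) :
    (A * B).1 = A.1 * B.1 := rfl

/-- the singleton element of P_fin(S) -/
def pf_sing {S : Type*} [Semigroup S] (x : S) : {X : Set S // X.Nonempty ∧ X.Finite} :=
  ⟨{x}, Set.singleton_nonempty x, Set.finite_singleton x⟩

lemma spow_sing {S : Type*} [Semigroup S] (x : S) (n : ℕ) :
    spow (pf_sing x) n = pf_sing (spow x n) := by
  induction n with
  | zero => rfl
  | succ n ih =>
    apply Subtype.ext
    show (spow (pf_sing x) n * pf_sing x).1 = _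
    rw [pf_mul_val, ih]
    show {spow x n} * {x} = ({spow x n * x} : Set S)
    exact Set.singleton_mul_singleton

lemma spow_mem {S : Type*} [Semigroup S] (A : {X : Set S // X.Nonempty ∧ X.Finite})
    {a : S} (ha : a ∈ A.1) (n : ℕ) : spow a n ∈ (spow A n).1 := by
  induction n with
  | zero => exact ha
  | succ n ih =>
    show spow a n * a ∈ (spow A n * A).1
    rw [pf_mul_val]
    exact Set.mul_mem_mul ih ha

theorem stmt_7 {S : Type*} [Semigroup S] :
    IsTorsionFreeSg S ↔ IsTorsionFreeSg {X : Set S // X.Nonempty ∧ X.Finite} := by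
  constructor
  · intro h A hfin
    have key : ∀ a ∈ A.1, ∀ z : S, a * z = z ∧ z * a = z := by
      intro a ha
      apply h
      have hsub : {y : S | ∃ n, spow a n = y} ⊆
          ⋃ Y ∈ {Y : {X : Set S // X.Nonempty ∧ X.Finite} | ∃ n : ℕ, spow A n = Y}, Y.1 := by
        rintro y ⟨n, rfl⟩
        exact Set.mem_biUnion ⟨n, rfl⟩ (spow_mem A ha n)
      exact (hfin.biUnion (fun Y _ => Y.2.2)).subset hsub
    intro Z
    obtain ⟨a, ha⟩ := A.2.1
    constructor <;> apply Subtype.ext <;> rw [pf_mul_val] <;> ext z <;> constructor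
    · rintro ⟨a', ha', w, hw, rfl⟩
      show a' * w ∈ Z.1
      rw [(key a' ha' w).1]; exact hw
    · intro hz; exact ⟨a, ha, z, hz, (key a ha z).1⟩
    · rintro ⟨w, hw, a', ha', rfl⟩
      show w * a' ∈ Z.1
      rw [(key a' ha' w).2]; exact hw
    · intro hz; exact ⟨z, hz, a, ha, (key a ha z).2⟩
  · intro h x hfin z
    have hfin' : ({Y : {X : Set S // X.Nonempty ∧ X.Finite} | ∃ n : ℕ,
        spow (pf_sing x) n = Y}).Finite := by
      apply (hfin.image pf_sing).subset
      rintro Y ⟨n, rfl⟩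
      exact ⟨spow x n, ⟨n, rfl⟩, (spow_sing x n).symm⟩
    have hx := h (pf_sing x) hfin' (pf_sing z)
    constructor
    · have := congrArg Subtype.val hx.1
      rw [pf_mul_val] at this
      have : ({x * z} : Set S) = {z} := by
        rw [← Set.singleton_mul_singleton]; exact this
      exact Set.singleton_eq_singleton_iff.mp this
    · have := congrArg Subtype.val hx.2
      rw [pf_mul_val] at this
      have : ({z * x} : Set S) = {z} := by
        rw [← Set.singleton_mul_singleton]; exact this
      exact Set.singleton_eq_singleton_iff.mp this
end

section
/- Let S be a torsion-free semigroup with identity adjoined if necessary, and let E be an idempotent of P(S) that is not the singleton of the identity. Then the equation EXE = E has infinitely many solutions X among nonempty subsets of S. -/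
open Pointwise

lemma spow_inj {T : Type*} [Semigroup T] (htf : IsTorsionFreeSg T) {x : T}
    (hx : ¬ ∀ z : T, x * z = z ∧ z * x = z) : Function.Injective (spow x) := by
  have key : ∀ a d : ℕ, spow x a ≠ spow x (a + d + 1) := by
    intro a d h
    apply hx
    apply htf
    have per : ∀ k, spow x (a + k) = spow x (a + d + 1 + k) := by
      intro k
      induction k with
      | zero => simpa using h
      | succ k ih =>
          have h1 : spow x (a + (k + 1)) = spow x (a + k) * x := rfl
          have h2 : spow x (a + d + 1 + (k + 1)) = spow x (a + d + 1 + k) * x := rfl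
          rw [h1, h2, ih]
    have bdd : ∀ n, ∃ m, m ≤ a + d ∧ spow x m = spow x n := by
      intro n
      induction n using Nat.strong_induction_on with
      | _ n ih =>
        by_cases hn : n ≤ a + d
        · exact ⟨n, hn, rfl⟩
        · obtain ⟨k, rfl⟩ : ∃ k, n = a + d + 1 + k := ⟨n - (a + d + 1), by omega⟩
          obtain ⟨m, hm, hm2⟩ := ih (a + k) (by omega)
          exact ⟨m, hm, by rw [hm2, per k]⟩
    apply Set.Finite.subset (Set.Finite.image (spow x) (Set.finite_Iic (a + d)))
    rintro y ⟨n, rfl⟩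
    obtain ⟨m, hm, hm2⟩ := bdd n
    exact ⟨m, hm, hm2⟩
  intro m n h
  by_contra hne
  rcases Nat.lt_or_ge m n with h' | h'
  · obtain ⟨d, rfl⟩ : ∃ d, n = m + d + 1 := ⟨n - m - 1, by omega⟩
    exact key m d h
  · have h'' : n < m := by omega
    obtain ⟨d, rfl⟩ : ∃ d, m = n + d + 1 := ⟨m - n - 1, by omega⟩
    exact key n d h.symm

lemma sandwich {S : Type*} [Semigroup S] (htf : IsTorsionFreeSg S)
    {E : Set S} (hid : E * E = E) (F : Finset S)
    (hF : ∀ f ∈ F, ∃ z : S, f * z ≠ z) :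
    ∀ e ∈ E, ∃ a m c : S, a ∈ E ∧ m ∈ E ∧ m ∉ F ∧ c ∈ E ∧ e = a * m * c := by
  classical
  have mulE : ∀ {a c : S}, a ∈ E → c ∈ E → a * c ∈ E := by
    intro a c ha hc; rw [← hid]; exact Set.mul_mem_mul ha hc
  have hdec : ∀ s : S, ∃ ac : S × S, s ∈ E → ac.1 ∈ E ∧ ac.2 ∈ E ∧ s = ac.1 * ac.2 := by
    intro s
    by_cases hs : s ∈ E
    · have hs2 : s ∈ E * E := by rw [hid]; exact hs
      rcases Set.mem_mul.1 hs2 with ⟨a, ha, c, hc, hac⟩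
      exact ⟨(a, c), fun _ => ⟨ha, hc, hac.symm⟩⟩
    · exact ⟨(s, s), fun h => absurd h hs⟩
  choose dec hdec using hdec
  intro e he
  set seq : ℕ → S × S := fun n => Nat.rec (dec e) (fun _ ih => dec ih.2) n with hseqdef
  set b : ℕ → S := fun n => (seq n).1 with hbdef
  set r : ℕ → S := fun n => (seq n).2 with hrdef
  have hrE : ∀ n, r n ∈ E := by
    intro n
    induction n with
    | zero => exact (hdec e he).2.1
    | succ n ih => exact (hdec (r n) ih).2.1
  have hbE : ∀ n, b n ∈ E := by
    intro n
    cases n with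
    | zero => exact (hdec e he).1
    | succ n => exact (hdec (r n) (hrE n)).1
  have hsplit : ∀ n, r n = b (n + 1) * r (n + 1) := fun n => (hdec (r n) (hrE n)).2.2
  have he0 : e = b 0 * r 0 := (hdec e he).2.2
  set P : ℕ → S := fun k => Nat.rec (b 1) (fun k ih => ih * b (k + 2)) k with hPdef
  have hP0 : P 0 = b 1 := rfl
  have hPs : ∀ k, P (k + 1) = P k * b (k + 2) := fun k => rfl
  have hPE : ∀ k, P k ∈ E := by
    intro k
    induction k with
    | zero => exact hP0 ▸ hbE 1
    | succ k ih => rw [hPs]; exact mulE ih (hbE (k + 2))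
  have heP : ∀ k, e = b 0 * P k * r (k + 1) := by
    intro k
    induction k with
    | zero =>
        have h0 : r 0 = b 1 * r 1 := hsplit 0
        show e = b 0 * P 0 * r 1
        rw [hP0, mul_assoc, ← h0]
        exact he0
    | succ k ih =>
        rw [hPs, ih, hsplit (k + 1)]
        simp only [mul_assoc]
  have hu : ∀ k d : ℕ, ∃ u, u ∈ E ∧ P (k + d + 1) = P k * u ∧ r (k + 1) = u * r (k + d + 2) := by
    intro k d
    induction d with
    | zero => exact ⟨b (k + 2), hbE (k + 2), hPs k, hsplit (k + 1)⟩
    | succ d ih =>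
        obtain ⟨u, huE, hP, hru⟩ := ih
        refine ⟨u * b (k + d + 3), mulE huE (hbE (k + d + 3)), ?_, ?_⟩
        · have : P (k + d + 1 + 1) = P (k + d + 1) * b (k + d + 3) := hPs (k + d + 1)
          rw [show k + (d + 1) + 1 = k + d + 1 + 1 by omega, this, hP, mul_assoc]
        · rw [hru, hsplit (k + d + 2), ← mul_assoc]
          rfl
  -- key construction given a repetition among partial products
  have key : ∀ k d : ℕ, P k = P (k + d + 1) →
      ∃ a m c : S, a ∈ E ∧ m ∈ E ∧ m ∉ F ∧ c ∈ E ∧ e = a * m * c := by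
    intro k d heq
    obtain ⟨u, huE, hPu, hru⟩ := hu k d
    have hPfix : P k * u = P k := by rw [← hPu, ← heq]
    have hspowE : ∀ q, spow u q ∈ E := by
      intro q
      induction q with
      | zero => exact huE
      | succ q ih => exact mulE ih huE
    have hPfix' : ∀ q, P k * spow u q = P k := by
      intro q
      induction q with
      | zero => exact hPfix
      | succ q ih =>
          have : spow u (q + 1) = spow u q * u := rfl
          rw [this, ← mul_assoc, ih, hPfix]
    have he2 : ∀ q, e = (b 0 * P k) * spow u q * (u * r (k + d + 2)) := by
      intro q
      rw [mul_assoc (b 0) (P k) (spow u q), hPfix' q, mul_assoc, ← hru, ← mul_assoc]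
      exact heP k
    by_cases hui : ∀ z : S, u * z = z ∧ z * u = z
    · have huF : u ∉ F := by
        intro hm
        obtain ⟨z, hz⟩ := hF u hm
        exact hz (hui z).1
      exact ⟨b 0 * P k, u, u * r (k + d + 2), mulE (hbE 0) (hPE k), huE, huF,
        mulE huE (hrE (k + d + 2)), he2 0⟩
    · have hinj := spow_inj htf hui
      have hfind : ∃ q ∈ Finset.range (F.card + 1), spow u q ∉ F := by
        by_contra hcon
        push_neg at hcon
        obtain ⟨q, hq, q', hq', hneq, heqq⟩ :=
          Finset.exists_ne_map_eq_of_card_lt_of_maps_to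
            (show F.card < (Finset.range (F.card + 1)).card by simp) hcon
        exact hneq (hinj heqq)
      obtain ⟨q, _, hqF⟩ := hfind
      exact ⟨b 0 * P k, spow u q, u * r (k + d + 2), mulE (hbE 0) (hPE k), hspowE q, hqF,
        mulE huE (hrE (k + d + 2)), he2 q⟩
  by_cases hall : ∃ k ≤ F.card, P k ∉ F
  · obtain ⟨k, _, hk⟩ := hall
    exact ⟨b 0, P k, r (k + 1), hbE 0, hPE k, hk, hrE (k + 1), heP k⟩
  · push_neg at hall
    obtain ⟨j, hj, j', hj', hne, heq⟩ :=
      Finset.exists_ne_map_eq_of_card_lt_of_maps_to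
        (show F.card < (Finset.range (F.card + 1)).card by simp)
        (fun k hk => hall k (Nat.lt_succ_iff.mp (Finset.mem_range.mp hk)))
    rcases lt_or_gt_of_ne hne with h | h
    · obtain ⟨d, rfl⟩ : ∃ d, j' = j + d + 1 := ⟨j' - j - 1, by omega⟩
      exact key j d heq
    · obtain ⟨d, rfl⟩ : ∃ d, j = j' + d + 1 := ⟨j - j' - 1, by omega⟩
      exact key j' d heq.symm

theorem stmt_8 {S : Type*} [Semigroup S] [Nonempty S] (htf : IsTorsionFreeSg S)
    (E : Set S) (hE : E.Nonempty) (hid : E * E = E)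
    (hnot : ¬∃ e : S, (∀ z : S, e * z = z ∧ z * e = z) ∧ E = {e}) :
    {X : Set S | X.Nonempty ∧ E * X * E = E}.Infinite := by
  classical
  have hx : ∃ x ∈ E, ¬ ∀ z : S, x * z = z ∧ z * x = z := by
    by_contra hcon
    push_neg at hcon
    obtain ⟨e, heE⟩ := hE
    apply hnot
    refine ⟨e, hcon e heE, ?_⟩
    ext f
    simp only [Set.mem_singleton_iff]
    constructor
    · intro hf
      have h1 := (hcon f hf e).1
      have h2 := (hcon e heE f).2
      exact h2.symm.trans h1
    · rintro rfl; exact heE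
  obtain ⟨x, hxE, hxid⟩ := hx
  have hinj := spow_inj htf hxid
  have mulE : ∀ {a c : S}, a ∈ E → c ∈ E → a * c ∈ E := by
    intro a c ha hc; rw [← hid]; exact Set.mul_mem_mul ha hc
  have hspowE : ∀ n, spow x n ∈ E := by
    intro n
    induction n with
    | zero => exact hxE
    | succ n ih => exact mulE ih hxE
  set F : ℕ → Finset S := fun n => (Finset.range n).image (spow x) with hFdef
  set X : ℕ → Set S := fun n => E \ ↑(F n) with hXdef
  have hxmem : ∀ n, spow x n ∈ X n := by
    intro n
    refine ⟨hspowE n, fun hmem => ?_⟩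
    rw [Finset.mem_coe, hFdef] at hmem
    simp only [Finset.mem_image, Finset.mem_range] at hmem
    obtain ⟨k, hk, hkeq⟩ := hmem
    exact absurd (hinj hkeq) (by omega)
  have hsol : ∀ n, X n ∈ {X : Set S | X.Nonempty ∧ E * X * E = E} := by
    intro n
    refine ⟨⟨spow x n, hxmem n⟩, ?_⟩
    apply Set.Subset.antisymm
    · intro y hy
      rcases Set.mem_mul.1 hy with ⟨ax, hax, c, hc, rfl⟩
      rcases Set.mem_mul.1 hax with ⟨a, ha, m, hm, rfl⟩
      exact mulE (mulE ha hm.1) hc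
    · intro e' he'
      obtain ⟨a, m, c, haE, hmE, hmF, hcE, heq⟩ :=
        sandwich htf hid (F n) (by
          intro f hf
          rw [hFdef] at hf
          simp only [Finset.mem_image, Finset.mem_range] at hf
          obtain ⟨k, hk, rfl⟩ := hf
          exact ⟨x, fun hcontra =>
            absurd (hinj (show spow x (k + 1) = spow x 0 from hcontra)) (by omega)⟩) e' he'
      rw [heq]
      exact Set.mul_mem_mul (Set.mul_mem_mul haE ⟨hmE, hmF⟩) hcE
  have hXinj : Function.Injective X := by
    intro n m h
    by_contra hne
    rcases Nat.lt_or_ge n m with h' | h'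
    · have h1 := hxmem n
      rw [h] at h1
      exact h1.2 (Finset.mem_coe.2 (Finset.mem_image.2 ⟨n, Finset.mem_range.2 h', rfl⟩))
    · have h'' : m < n := by omega
      have h1 := hxmem m
      rw [← h] at h1
      exact h1.2 (Finset.mem_coe.2 (Finset.mem_image.2 ⟨m, Finset.mem_range.2 h'', rfl⟩))
  exact Set.infinite_of_injective_forall_mem hXinj hsol
end

section
/- If H is a torsion-free monoid and K is a monoid such that P(H) is isomorphic to P(K) as semigroups, then K is torsion-free. -/
open Pointwise

/-- A monoid is torsion-free if for every non-identity `x` the map `n ↦ xⁿ`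
is injective on positive integers and `xⁿ ≠ 1` for all `n ≥ 1`. -/
def MonoidTF (M : Type*) [Monoid M] : Prop :=
  ∀ x : M, x ≠ 1 →
    (∀ m n : ℕ, x ^ (m + 1) = x ^ (n + 1) → m = n) ∧ (∀ n : ℕ, x ^ (n + 1) ≠ 1)

namespace Stmt9Aux

def oneS (M : Type*) [Monoid M] : {X : Set M // X.Nonempty} := ⟨{1}, ⟨1, rfl⟩⟩

noncomputable def sp {M : Type*} [Monoid M] (X : {X : Set M // X.Nonempty}) :
    ℕ → {X : Set M // X.Nonempty} :=
  fun n => Nat.rec X (fun _ Y => Y * X) n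

lemma sp_val {M : Type*} [Monoid M] (X : {X : Set M // X.Nonempty}) (n : ℕ) :
    (sp X n).1 = X.1 ^ (n + 1) := by
  induction n with
  | zero => simp [sp, pow_one]
  | succ n ih =>
      show ((sp X n) * X).1 = X.1 ^ (n + 1 + 1)
      rw [pow_succ, ← ih]; rfl

variable {H K : Type*} [Monoid H] [Monoid K]

lemma f_sp (f : {X : Set H // X.Nonempty} → {Y : Set K // Y.Nonempty})
    (hmul : ∀ A B, f (A * B) = f A * f B) (X : {X : Set H // X.Nonempty}) (n : ℕ) :
    f (sp X n) = sp (f X) n := by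
  induction n with
  | zero => rfl
  | succ n ih =>
      show f (sp X n * X) = sp (f X) n * f X
      rw [hmul, ih]

lemma f_one (f : {X : Set H // X.Nonempty} → {Y : Set K // Y.Nonempty})
    (hbij : Function.Bijective f) (hmul : ∀ A B, f (A * B) = f A * f B) :
    f (oneS H) = oneS K := by
  have hr : ∀ Y, Y * f (oneS H) = Y := by
    intro Y
    obtain ⟨Z, rfl⟩ := hbij.2 Y
    rw [← hmul]
    congr 1
    apply Subtype.ext
    show Z.1 * ({1} : Set H) = Z.1
    rw [Set.singleton_one, mul_one]
  have h2 : oneS K * f (oneS H) = f (oneS H) := by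
    apply Subtype.ext
    show ({1} : Set K) * (f (oneS H)).1 = (f (oneS H)).1
    rw [Set.singleton_one, one_mul]
  exact h2.symm.trans (hr (oneS K))

lemma no_torsion_unit (htf : MonoidTF H)
    (f : {X : Set H // X.Nonempty} → {Y : Set K // Y.Nonempty})
    (hbij : Function.Bijective f) (hmul : ∀ A B, f (A * B) = f A * f B) :
    ∀ x : K, x ≠ 1 → ∀ n : ℕ, x ^ (n + 1) = 1 → False := by
  intro x hx n hxn
  obtain ⟨X, hX⟩ := hbij.2 ⟨{x}, Set.singleton_nonempty x⟩
  have hsp : sp X n = oneS H := by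
    apply hbij.1
    rw [f_sp f hmul, hX, f_one f hbij hmul]
    apply Subtype.ext
    have h1 : (sp (⟨{x}, Set.singleton_nonempty x⟩ :
        {Y : Set K // Y.Nonempty}) n).1 = ({x} : Set K) ^ (n + 1) := sp_val _ n
    rw [h1]
    show ({x} : Set K) ^ (n + 1) = {1}
    rw [Set.singleton_pow, hxn]
  have hXp : X.1 ^ (n + 1) = ({1} : Set H) := by
    have h2 : (sp X n).1 = ({1} : Set H) := congrArg Subtype.val hsp
    rwa [sp_val] at h2
  obtain ⟨u, hu⟩ := X.2
  by_cases hu1 : u = 1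
  · subst hu1
    have hsub : X.1 ⊆ {1} := by
      intro v hv
      have hv1 : (1 : H) ∈ X.1 ^ n := by simpa using Set.pow_mem_pow hu
      have hm : 1 * v ∈ X.1 ^ n * X.1 := Set.mul_mem_mul hv1 hv
      rw [one_mul, ← pow_succ] at hm
      rw [hXp] at hm
      exact hm
    have hX1 : X.1 = {1} := hsub.antisymm (Set.singleton_subset_iff.mpr hu)
    have hXone : X = oneS H := Subtype.ext hX1
    rw [hXone, f_one f hbij hmul] at hX
    have h3 : ({1} : Set K) = {x} := congrArg Subtype.val hX
    apply hx
    have hxx : x ∈ ({1} : Set K) := by rw [h3]; rfl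
    simpa using hxx
  · have hp : u ^ (n + 1) ∈ X.1 ^ (n + 1) := Set.pow_mem_pow hu
    rw [hXp] at hp
    exact (htf u hu1).2 n hp

lemma no_idem (htf : MonoidTF H)
    (f : {X : Set H // X.Nonempty} → {Y : Set K // Y.Nonempty})
    (hbij : Function.Bijective f) (hmul : ∀ A B, f (A * B) = f A * f B) :
    ∀ e : K, e * e = e → e ≠ 1 → False := by
  intro e hee he1
  have he_right : ∀ t : K, t * e ≠ 1 := by
    intro t h
    apply he1
    calc e = (t * e) * e := by rw [h, one_mul]
    _ = t * (e * e) := by rw [mul_assoc]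
    _ = t * e := by rw [hee]
    _ = 1 := h
  set A : {X : Set K // X.Nonempty} := ⟨{1, e}, ⟨1, Set.mem_insert 1 ({e} : Set K)⟩⟩ with hA
  obtain ⟨B, hB⟩ := hbij.2 A
  have hA2 : A * A = A := by
    apply Subtype.ext
    show ({1, e} : Set K) * ({1, e} : Set K) = ({1, e} : Set K)
    ext k
    rw [Set.mem_mul]
    constructor
    · rintro ⟨p, hp, q, hq, rfl⟩
      simp only [Set.mem_insert_iff, Set.mem_singleton_iff] at hp hq ⊢
      rcases hp with rfl | rfl <;> rcases hq with rfl | rfl <;> simp [hee]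
    · intro hk
      rcases hk with rfl | hk
      · exact ⟨1, Set.mem_insert 1 ({e} : Set K), 1, Set.mem_insert 1 ({e} : Set K), one_mul 1⟩
      · rw [Set.mem_singleton_iff] at hk
        exact ⟨1, Set.mem_insert 1 ({e} : Set K), e,
          Set.mem_insert_iff.mpr (Or.inr rfl), by rw [one_mul]; exact hk.symm⟩
  have hBB : B * B = B := hbij.1 (by rw [hmul, hB, hA2])
  have hBBv : B.1 * B.1 = B.1 := congrArg Subtype.val hBB
  have hBne : B ≠ oneS H := by
    intro h
    rw [h, f_one f hbij hmul] at hB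
    have h2 : ({1} : Set K) = {1, e} := congrArg Subtype.val hB
    have h3 : e ∈ ({1} : Set K) := by
      rw [h2]; exact Set.mem_insert_iff.mpr (Or.inr rfl)
    exact he1 (by simpa using h3)
  -- the key solution-set lemma
  have hsol : ∀ Z, B * Z * B = B → Z = oneS H ∨ Z = B := by
    intro Z hZ
    have hfZ : A * f Z * A = A := by
      rw [← hB, ← hmul, ← hmul]
      exact congrArg f hZ
    have hYval : (({1, e} : Set K) * (f Z).1) * ({1, e} : Set K) = {1, e} :=
      congrArg Subtype.val hfZ
    have hYsub : (f Z).1 ⊆ {1, e} := by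
      intro y hy
      have hm : (1 * y) * 1 ∈ (({1, e} : Set K) * (f Z).1) * ({1, e} : Set K) :=
        Set.mul_mem_mul (Set.mul_mem_mul (Set.mem_insert 1 ({e} : Set K)) hy)
          (Set.mem_insert 1 ({e} : Set K))
      rw [hYval] at hm
      simpa using hm
    have h1Y : (1 : K) ∈ (f Z).1 := by
      have h1 : (1 : K) ∈ (({1, e} : Set K) * (f Z).1) * ({1, e} : Set K) := by
        rw [hYval]; exact Set.mem_insert 1 ({e} : Set K)
      obtain ⟨w, hw, c, hc, hwc⟩ := Set.mem_mul.mp h1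
      obtain ⟨p, hp, y, hy, hpy⟩ := Set.mem_mul.mp hw
      rw [← hpy] at hwc
      have hy2 := hYsub hy
      simp only [Set.mem_insert_iff, Set.mem_singleton_iff] at hy2 hc
      rcases hy2 with rfl | hye
      · exact hy
      · exfalso
        rw [hye] at hwc
        rcases hc with rfl | hce
        · rw [mul_one] at hwc
          exact he_right p hwc
        · rw [hce] at hwc
          exact he_right (p * e) hwc
    by_cases heY : e ∈ (f Z).1
    · right
      apply hbij.1
      rw [hB]
      apply Subtype.ext
      show (f Z).1 = ({1, e} : Set K)
      exact hYsub.antisymm (Set.insert_subset_iff.mpr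
        ⟨h1Y, Set.singleton_subset_iff.mpr heY⟩)
    · left
      apply hbij.1
      rw [f_one f hbij hmul]
      apply Subtype.ext
      show (f Z).1 = ({1} : Set K)
      apply Set.Subset.antisymm
      · intro y hy
        have := hYsub hy
        simp only [Set.mem_insert_iff, Set.mem_singleton_iff] at this ⊢
        rcases this with rfl | rfl
        · rfl
        · exact absurd hy heY
      · exact Set.singleton_subset_iff.mpr h1Y
  -- step 1 : 1 ∈ B
  have h1B : (1 : H) ∈ B.1 := by
    have hZ0 : B * ⟨insert 1 B.1, ⟨1, Set.mem_insert 1 _⟩⟩ * B = B := by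
      apply Subtype.ext
      show B.1 * insert 1 B.1 * B.1 = B.1
      rw [Set.insert_eq, Set.mul_union, Set.singleton_one, mul_one, hBBv,
        Set.union_self, hBBv]
    rcases hsol _ hZ0 with h | h
    · exfalso
      have hv : insert 1 B.1 = ({1} : Set H) := congrArg Subtype.val h
      apply hBne
      apply Subtype.ext
      show B.1 = ({1} : Set H)
      have hsub : B.1 ⊆ {1} := by
        intro b hb
        rw [← hv]; exact Set.mem_insert_of_mem _ hb
      exact hsub.antisymm (by
        intro z hz
        rw [Set.mem_singleton_iff] at hz
        subst hz
        rcases B.2 with ⟨b, hb⟩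
        have : b ∈ ({1} : Set H) := hsub hb
        rw [Set.mem_singleton_iff] at this
        rwa [← this])
    · have hv : insert 1 B.1 = B.1 := congrArg Subtype.val h
      rw [← hv]
      exact Set.mem_insert 1 _
  -- step 2 : get b ≠ 1 in B
  obtain ⟨b, hb, hbne⟩ : ∃ b ∈ B.1, b ≠ 1 := by
    by_contra hcon
    push_neg at hcon
    apply hBne
    apply Subtype.ext
    show B.1 = ({1} : Set H)
    apply Set.Subset.antisymm
    · intro v hv; exact Set.mem_singleton_iff.mpr (hcon v hv)
    · exact Set.singleton_subset_iff.mpr h1B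
  -- step 3 : B = {1, b}
  have hZb : B * ⟨{1, b}, ⟨1, Set.mem_insert 1 {b}⟩⟩ * B = B := by
    apply Subtype.ext
    show B.1 * ({1, b} : Set H) * B.1 = B.1
    rw [Set.insert_eq, Set.mul_union, Set.singleton_one, mul_one, Set.union_mul,
      hBBv]
    apply Set.union_eq_left.mpr
    calc (B.1 * {b}) * B.1 ⊆ (B.1 * B.1) * B.1 := by
          apply Set.mul_subset_mul_right
          exact Set.mul_subset_mul_left (Set.singleton_subset_iff.mpr hb)
    _ = B.1 := by rw [hBBv, hBBv]
  rcases hsol _ hZb with h | h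
  · have hv : ({1, b} : Set H) = {1} := congrArg Subtype.val h
    apply hbne
    have : b ∈ ({1} : Set H) := by
      rw [← hv]; exact Set.mem_insert_iff.mpr (Or.inr rfl)
    simpa using this
  · have hv : ({1, b} : Set H) = B.1 := congrArg Subtype.val h
    have hbb : b * b ∈ B.1 := by
      rw [← hBBv]; exact Set.mul_mem_mul hb hb
    rw [← hv] at hbb
    simp only [Set.mem_insert_iff, Set.mem_singleton_iff] at hbb
    rcases hbb with h1 | h1
    · exact (htf b hbne).2 1 (by rw [pow_succ, pow_one]; exact h1)
    · have e1 : b ^ (1 + 1) = b * b := by rw [pow_succ, pow_one]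
      have e2 : b ^ (0 + 1) = b := by norm_num
      exact one_ne_zero ((htf b hbne).1 1 0 (by rw [e1, e2]; exact h1))

lemma period_false (htf : MonoidTF H)
    (f : {X : Set H // X.Nonempty} → {Y : Set K // Y.Nonempty})
    (hbij : Function.Bijective f) (hmul : ∀ A B, f (A * B) = f A * f B) :
    ∀ x : K, x ≠ 1 → ∀ a d : ℕ, 1 ≤ a → 1 ≤ d → x ^ a = x ^ (a + d) → False := by
  intro x hx a d ha hd hper
  have hstep : ∀ t, a ≤ t → x ^ (t + d) = x ^ t := by
    intro t ht
    have h1 : x ^ (t + d) = x ^ (a + d) * x ^ (t - a) := by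
      rw [← pow_add]
      congr 1
      omega
    rw [h1, ← hper, ← pow_add, show a + (t - a) = t from by omega]
  have hper2 : ∀ k t, a ≤ t → x ^ (t + k * d) = x ^ t := by
    intro k
    induction k with
    | zero => intro t ht; simp
    | succ k ih =>
        intro t ht
        have h1 : x ^ (t + (k + 1) * d) = x ^ ((t + k * d) + d) := by
          congr 1
          ring
        rw [h1, hstep _ (by omega), ih t ht]
  have hcge : a ≤ a * d := Nat.le_mul_of_pos_right a hd
  have hee : x ^ (a * d) * x ^ (a * d) = x ^ (a * d) := by
    rw [← pow_add]
    exact hper2 a (a * d) hcge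
  by_cases hone : x ^ (a * d) = 1
  · refine no_torsion_unit htf f hbij hmul x hx (a * d - 1) ?_
    rw [show a * d - 1 + 1 = a * d from by
      have : 1 ≤ a * d := Nat.mul_pos ha hd
      omega]
    exact hone
  · exact no_idem htf f hbij hmul (x ^ (a * d)) hee hone

end Stmt9Aux

theorem stmt_9 {H K : Type*} [Monoid H] [Monoid K] (htf : MonoidTF H)
    (f : {X : Set H // X.Nonempty} → {Y : Set K // Y.Nonempty})
    (hbij : Function.Bijective f) (hmul : ∀ A B, f (A * B) = f A * f B) :
    MonoidTF K := by
  intro x hx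
  constructor
  · intro m n hmn
    rcases Nat.lt_trichotomy m n with h | h | h
    · exfalso
      refine Stmt9Aux.period_false htf f hbij hmul x hx (m + 1) (n - m)
        (by omega) (by omega) ?_
      rw [show m + 1 + (n - m) = n + 1 from by omega]
      exact hmn
    · exact h
    · exfalso
      refine Stmt9Aux.period_false htf f hbij hmul x hx (n + 1) (m - n)
        (by omega) (by omega) ?_
      rw [show n + 1 + (m - n) = m + 1 from by omega]
      exact hmn.symm
  · intro n hcon
    exact Stmt9Aux.no_torsion_unit htf f hbij hmul x hx n hcon
end

section
/- If X ⊆ ℕ contains 0, satisfies X + {0,u} = X + {0,v} for distinct u, v ∈ ℕ, and X is infinite, then the set of gaps Δ(X) := {x_{k+1} − x_k : k ∈ ℕ} (where x₀ < x₁ < ⋯ enumerates X) is finite, and consequently X has positive lower asymptotic density. -/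
open Pointwise

/-- The lower asymptotic density of a set of naturals. -/
noncomputable def ldens (X : Set ℕ) : ℝ :=
  Filter.atTop.liminf fun n : ℕ => ((X ∩ Set.Icc 1 n).ncard : ℝ) / n

lemma step_aux (X : Set ℕ) (u v : ℕ) (huv : u < v)
    (heq : X + ({0, u} : Set ℕ) = X + ({0, v} : Set ℕ)) :
    ∀ x ∈ X, ∃ y ∈ X, x < y ∧ y ≤ x + max u v := by
  intro x hx
  have hm : x + v ∈ X + ({0, u} : Set ℕ) := by
    rw [heq]
    exact Set.add_mem_add hx (by simp)
  obtain ⟨a, ha, b, hb, hab⟩ := hm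
  have hab' : a + b = x + v := hab
  have hmax : max u v = v := max_eq_right huv.le
  simp only [Set.mem_insert_iff, Set.mem_singleton_iff] at hb
  rcases hb with rfl | rfl
  · exact ⟨a, ha, by omega, by omega⟩
  · exact ⟨a, ha, by omega, by omega⟩

theorem stmt_14 (X : Set ℕ) (h0 : (0 : ℕ) ∈ X) (hinf : X.Infinite)
    (u v : ℕ) (huv : u ≠ v)
    (heq : X + ({0, u} : Set ℕ) = X + ({0, v} : Set ℕ)) :
    {d : ℕ | ∃ k : ℕ,
        d = Nat.nth (· ∈ X) (k + 1) - Nat.nth (· ∈ X) k}.Finite ∧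
      0 < ldens X := by
  set w := max u v with hwdef
  have hw : 0 < w := by omega
  have hinf' : {x | x ∈ X}.Infinite := hinf
  have step : ∀ x ∈ X, ∃ y ∈ X, x < y ∧ y ≤ x + w := by
    rcases lt_or_gt_of_ne huv with h | h
    · exact step_aux X u v h heq
    · have := step_aux X v u h heq.symm
      simpa [hwdef, max_comm] using this
  -- nth basics
  have hnth_mem : ∀ k, Nat.nth (· ∈ X) k ∈ X := fun k =>
    Nat.nth_mem_of_infinite hinf' k
  have hnth0 : Nat.nth (· ∈ X) 0 = 0 := Nat.nth_zero_of_zero h0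
  have hgap : ∀ k, Nat.nth (· ∈ X) (k + 1) ≤ Nat.nth (· ∈ X) k + w := by
    intro k
    obtain ⟨y, hy, hlt, hle⟩ := step _ (hnth_mem k)
    by_contra hcon
    push_neg at hcon
    have := Nat.le_nth_of_lt_nth_succ (lt_of_le_of_lt hle hcon) hy
    omega
  constructor
  · apply Set.Finite.subset (Set.finite_Iic w)
    rintro d ⟨k, rfl⟩
    have := hgap k
    simp only [Set.mem_Iic]
    omega
  -- linear growth
  have hlin : ∀ k, Nat.nth (· ∈ X) k ≤ k * w := by
    intro k
    induction k with
    | zero => simp [hnth0]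
    | succ n ih =>
      calc Nat.nth (· ∈ X) (n + 1) ≤ Nat.nth (· ∈ X) n + w := hgap n
        _ ≤ n * w + w := by omega
        _ = (n + 1) * w := by ring
  have hk_le : ∀ k, k ≤ Nat.nth (· ∈ X) k := fun k =>
    (Nat.nth_strictMono hinf').le_apply
  -- cardinality lower bound
  have hcard : ∀ n : ℕ, n / w ≤ (X ∩ Set.Icc 1 n).ncard := by
    intro n
    have hfin : (X ∩ Set.Icc 1 n).Finite :=
      (Set.finite_Icc 1 n).subset (Set.inter_subset_right)
    have hsub : (Finset.Icc 1 (n / w)).image (Nat.nth (· ∈ X)) ⊆ hfin.toFinset := by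
      intro y hy
      simp only [Finset.mem_image, Finset.mem_Icc] at hy
      obtain ⟨k, ⟨hk1, hk2⟩, rfl⟩ := hy
      simp only [Set.Finite.mem_toFinset, Set.mem_inter_iff, Set.mem_Icc]
      refine ⟨hnth_mem k, le_trans hk1 (hk_le k), ?_⟩
      calc Nat.nth (· ∈ X) k ≤ k * w := hlin k
        _ ≤ (n / w) * w := Nat.mul_le_mul_right w hk2
        _ ≤ n := Nat.div_mul_le_self n w
    have hcardim : ((Finset.Icc 1 (n / w)).image (Nat.nth (· ∈ X))).card = n / w := by
      rw [Finset.card_image_of_injective _ (Nat.nth_injective hinf')]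
      simp
    have := Finset.card_le_card hsub
    rw [hcardim] at this
    rwa [Set.ncard_eq_toFinset_card _ hfin]
  -- density
  have hlow : ∀ᶠ n : ℕ in Filter.atTop,
      (1 : ℝ) / (2 * w) ≤ ((X ∩ Set.Icc 1 n).ncard : ℝ) / n := by
    filter_upwards [Filter.eventually_ge_atTop (2 * w)] with n hn
    have hn0 : 0 < n := by omega
    have hnat : n ≤ 2 * (w * (n / w)) := by
      have h1 : n % w < w := Nat.mod_lt _ hw
      have h2 : w * (n / w) + n % w = n := Nat.div_add_mod n w
      have h3 : 2 ≤ n / w := Nat.le_div_iff_mul_le hw |>.mpr (by omega)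
      have h4 : w * 2 ≤ w * (n / w) := Nat.mul_le_mul_left w h3
      omega
    have h1 : (1 : ℝ) / (2 * w) ≤ ((n / w : ℕ) : ℝ) / n := by
      rw [div_le_div_iff₀ (by positivity) (by positivity)]
      have := (Nat.cast_le (α := ℝ)).mpr hnat
      push_cast at this ⊢
      linarith
    refine h1.trans ?_
    gcongr
    exact_mod_cast hcard n
  unfold ldens
  calc (0 : ℝ) < 1 / (2 * w) := by positivity
    _ ≤ _ := by
      apply Filter.le_liminf_of_le _ hlow
      refine Filter.IsBoundedUnder.isCoboundedUnder_ge ⟨1, Filter.eventually_map.mpr ?_⟩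
      filter_upwards [Filter.eventually_ge_atTop 1] with n hn
      have : (X ∩ Set.Icc 1 n).ncard ≤ n := by
        have := Set.ncard_le_ncard (Set.inter_subset_right (s := X) (t := Set.Icc 1 n))
          (Set.finite_Icc 1 n)
        simpa [Set.ncard_eq_toFinset_card'] using this
      rw [div_le_one (by positivity)]
      exact_mod_cast this
end

section
/- Let M be a monoid, S ⊆ M with 1 ∈ S, and n ≥ 3 an integer. Then for every T ⊆ S with 1 ∉ T, one has (S^{n−1} \ T) · S = Sⁿ, where products and powers of sets are setwise. In particular, the equation A·S = Sⁿ has at least 2^{|S|−1} solutions A among nonempty subsets of M when S is finite. -/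
open Pointwise

theorem stmt_16 {M : Type*} [Monoid M] (S : Set M) (h1 : (1 : M) ∈ S)
    (n : ℕ) (hn : 3 ≤ n) :
    (∀ T ⊆ S, (1 : M) ∉ T → (S ^ (n - 1) \ T) * S = S ^ n) ∧
      (S.Finite →
        2 ^ (S.ncard - 1) ≤ {A : Set M | A.Nonempty ∧ A * S = S ^ n}.ncard) := by
  classical
  have hpow : S ^ (n - 1) * S = S ^ n := by
    rw [← pow_succ]; congr 1; omega
  have hSsub : S ⊆ S ^ (n - 1) := by
    have := Set.pow_subset_pow_right h1 (show 1 ≤ n - 1 by omega)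
    simpa using this
  have hmain : ∀ T ⊆ S, (1 : M) ∉ T → (S ^ (n - 1) \ T) * S = S ^ n := by
    intro T hTS hT1
    apply subset_antisymm
    · calc (S ^ (n - 1) \ T) * S ⊆ S ^ (n - 1) * S :=
            Set.mul_subset_mul_right Set.diff_subset
        _ = S ^ n := hpow
    · intro x hx
      by_cases hxT : x ∈ T
      · exact ⟨1, ⟨Set.one_mem_pow h1, hT1⟩, x, hTS hxT, one_mul x⟩
      · rw [← hpow] at hx
        obtain ⟨y, hy, s, hs, rfl⟩ := hx
        by_cases hyT : y ∈ T
        · have hys : y * s ∈ S ^ (n - 1) := by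
            have : y * s ∈ S * S := ⟨y, hTS hyT, s, hs, rfl⟩
            have h2 : S * S ⊆ S ^ (n - 1) := by
              have := Set.pow_subset_pow_right h1 (show 2 ≤ n - 1 by omega)
              rwa [sq] at this
            exact h2 this
          exact ⟨y * s, ⟨hys, hxT⟩, 1, h1, mul_one _⟩
        · exact ⟨y, ⟨hy, hyT⟩, s, hs, rfl⟩
  refine ⟨hmain, fun hS => ?_⟩
  have hSn : ∀ k, (S ^ k : Set M).Finite := by
    intro k
    induction k with
    | zero => simp only [pow_zero]; exact Set.finite_one
    | succ k ih => rw [pow_succ]; exact ih.mul hS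
  set F : Finset M := (hS.diff : (S \ {1}).Finite).toFinset with hF
  have hFcoe : (F : Set M) = S \ {1} := (hS.diff : (S \ {1}).Finite).coe_toFinset
  set g : Finset M → Set M := fun t => S ^ (n - 1) \ ↑t with hg
  have himg : ↑(F.powerset.image g) ⊆ {A : Set M | A.Nonempty ∧ A * S = S ^ n} := by
    intro A hA
    simp only [Finset.coe_image, Set.mem_image, Finset.mem_coe,
      Finset.mem_powerset] at hA
    obtain ⟨t, ht, rfl⟩ := hA
    have htS : (↑t : Set M) ⊆ S \ {1} := by
      rw [← hFcoe]; exact_mod_cast ht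
    have h1t : (1 : M) ∉ (↑t : Set M) := fun h => (htS h).2 rfl
    refine ⟨⟨1, Set.one_mem_pow h1, h1t⟩, hmain _ (fun x hx => (htS hx).1) h1t⟩
  have hinj : Set.InjOn g ↑F.powerset := by
    intro t ht u hu htu
    simp only [Finset.mem_coe, Finset.mem_powerset] at ht hu
    have h1 : (↑t : Set M) ⊆ S ^ (n - 1) := by
      refine Set.Subset.trans ?_ hSsub
      intro x hx
      have := hFcoe ▸ (Finset.coe_subset.mpr ht) hx
      exact this.1
    have h2 : (↑u : Set M) ⊆ S ^ (n - 1) := by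
      refine Set.Subset.trans ?_ hSsub
      intro x hx
      have := hFcoe ▸ (Finset.coe_subset.mpr hu) hx
      exact this.1
    have : (↑t : Set M) = ↑u := by
      rw [← Set.diff_diff_cancel_left h1, ← Set.diff_diff_cancel_left h2]
      exact congrArg _ htu
    exact_mod_cast this
  have hcard : 2 ^ (S.ncard - 1) = (F.powerset.image g).card := by
    rw [Finset.card_image_of_injOn hinj, Finset.card_powerset]
    congr 1
    rw [hF, ← Set.ncard_coe_finset, hFcoe]
    exact (Set.ncard_diff_singleton_of_mem h1).symm
  have hfin : {A : Set M | A.Nonempty ∧ A * S = S ^ n}.Finite := by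
    apply ((hSn n).finite_subsets).subset
    rintro A ⟨-, hA⟩
    intro a ha
    rw [← hA]
    exact ⟨a, ha, 1, h1, mul_one a⟩
  calc 2 ^ (S.ncard - 1) = (F.powerset.image g).card := hcard
    _ = (↑(F.powerset.image g) : Set (Set M)).ncard := (Set.ncard_coe_finset _).symm
    _ ≤ _ := Set.ncard_le_ncard himg hfin
end

section
/- Let M be a monoid and X ⊆ M with 1 ∈ X. Then the equation A·X = X³ has only finitely many solutions A among nonempty subsets of M if and only if X is finite. -/
open Pointwise

theorem stmt_17 {M : Type*} [Monoid M] (X : Set M) (h1 : (1 : M) ∈ X) :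
    {A : Set M | A.Nonempty ∧ A * X = X ^ 3}.Finite ↔ X.Finite := by
  have hpow : (X : Set M) ^ 3 = X ^ 2 * X := by rw [pow_succ]
  have h1sq : (1 : M) ∈ X ^ 2 := by
    rw [sq]
    simpa using Set.mul_mem_mul h1 h1
  constructor
  · intro hfin
    by_contra hXinf
    have hX : X.Infinite := hXinf
    -- key: for x ∈ X \ {1}, A := X^2 \ {x} is a solution
    have key : ∀ x ∈ X \ {1}, (X ^ 2 \ {x}) * X = X ^ 3 := by
      rintro x ⟨hxX, hx1⟩
      apply subset_antisymm
      · rw [hpow]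
        exact Set.mul_subset_mul_right Set.diff_subset
      · rw [hpow]
        rintro p ⟨q, hq, w, hw, rfl⟩
        by_cases hqx : q = x
        · subst hqx
          by_cases hp : q * w = q
          · exact ⟨1, ⟨h1sq, fun h => hx1 h.symm⟩, q, hxX,
              by show (1 : M) * q = q * w; rw [one_mul, hp]⟩
          · refine ⟨q * w, ⟨?_, hp⟩, 1, h1, mul_one _⟩
            rw [sq]
            exact Set.mul_mem_mul hxX hw
        · exact Set.mul_mem_mul ⟨hq, hqx⟩ hw
    have hinj : Set.InjOn (fun x => X ^ 2 \ {x}) (X \ {1}) := by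
      intro x hx y hy hxy
      dsimp only at hxy
      by_contra hne
      have hxX2 : x ∈ X ^ 2 := by
        rw [sq]; simpa using Set.mul_mem_mul hx.1 h1
      have : x ∈ X ^ 2 \ {y} := ⟨hxX2, hne⟩
      rw [← hxy] at this
      exact this.2 rfl
    have himg : ((fun x => X ^ 2 \ {x}) '' (X \ {1})).Infinite :=
      Set.Infinite.image hinj (hX.diff (Set.finite_singleton 1))
    have hsub : ((fun x => X ^ 2 \ {x}) '' (X \ {1})) ⊆
        {A : Set M | A.Nonempty ∧ A * X = X ^ 3} := by
      rintro A ⟨x, hx, rfl⟩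
      refine ⟨⟨1, h1sq, fun h => hx.2 (h.symm : x = 1)⟩, key x hx⟩
    exact (himg.mono hsub) hfin
  · intro hX
    have h3 : ((X : Set M) ^ 3).Finite := by
      rw [hpow, sq]
      exact (hX.mul hX).mul hX
    refine h3.finite_subsets.subset ?_
    rintro A ⟨hne, hAX⟩
    intro y hy
    rw [← hAX]
    simpa using Set.mul_mem_mul hy h1
end
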